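/- arXiv:1907.06998 — 5 statements merged into one kernel-verified Lean document; each statement's English description precedes it below -/
import Mathlib

section
/- Let ψ₀ : ℝ → ℝ be continuous with ψ₀(x) → C₊ as x → +∞ and ψ₀(x) → C₋ as x → −∞, and let π₀ ∈ L¹(ℝ). Define the d'Alembert solution ψ(x,t) = ½(ψ₀(x+t) + ψ₀(x−t)) + ½∫_{x−t}^{x+t} π₀(y) dy. Then for every R > 0, ψ(x,t) → S₊ := (C₊+C₋)/2 + ½∫_ℝ π₀(y) dy uniformly in |x| ≤ R as t → +∞, and ψ(x,t) → S₋ := (C₊+C₋)/2 − ½∫_ℝ π₀(y) dy uniformly in |x| ≤ R as t → −∞. -/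
open Filter MeasureTheory

lemma dalembert_tail_bound (π₀ : ℝ → ℝ) (hπ : Integrable π₀ volume) {a b s : ℝ}
    (hs : 0 ≤ s) (ha : a ≤ -s) (hb : s ≤ b) :
    |(∫ y, π₀ y) - ∫ y in a..b, π₀ y| ≤ (∫ y, |π₀ y|) - ∫ y in (-s)..s, |π₀ y| := by
  have hab : a ≤ b := by linarith
  rw [intervalIntegral.integral_of_le hab,
    intervalIntegral.integral_of_le (by linarith : -s ≤ s)]
  have h1 : (∫ y, π₀ y) - ∫ y in Set.Ioc a b, π₀ y = ∫ y in (Set.Ioc a b)ᶜ, π₀ y := by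
    rw [← MeasureTheory.integral_add_compl measurableSet_Ioc hπ]; ring
  have h1' : (∫ y, |π₀ y|) - ∫ y in Set.Ioc (-s) s, |π₀ y|
      = ∫ y in (Set.Ioc (-s) s)ᶜ, |π₀ y| := by
    rw [← MeasureTheory.integral_add_compl measurableSet_Ioc hπ.abs]; ring
  rw [h1, h1']
  calc |∫ y in (Set.Ioc a b)ᶜ, π₀ y| ≤ ∫ y in (Set.Ioc a b)ᶜ, |π₀ y| := by
        simpa using norm_integral_le_integral_norm (μ := volume.restrict (Set.Ioc a b)ᶜ) π₀
    _ ≤ ∫ y in (Set.Ioc (-s) s)ᶜ, |π₀ y| := by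
        apply MeasureTheory.setIntegral_mono_set hπ.abs.integrableOn
        · exact Filter.Eventually.of_forall fun y => abs_nonneg _
        · exact (Set.compl_subset_compl.mpr (Set.Ioc_subset_Ioc ha hb)).eventuallyLE

lemma dalembert_aux (ψ₀ π₀ : ℝ → ℝ) (Cp Cm : ℝ)
    (hplus : Tendsto ψ₀ atTop (nhds Cp))
    (hminus : Tendsto ψ₀ atBot (nhds Cm))
    (hπ : Integrable π₀ volume) (R : ℝ) :
    TendstoUniformlyOn
      (fun t x => (ψ₀ (x + t) + ψ₀ (x - t)) / 2 + (∫ y in (x - t)..(x + t), π₀ y) / 2)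
      (fun _ => (Cp + Cm) / 2 + (∫ y, π₀ y) / 2)
      atTop {x : ℝ | |x| ≤ R} := by
  rw [Metric.tendstoUniformlyOn_iff]
  intro ε hε
  obtain ⟨M₁, hM₁⟩ := eventually_atTop.mp (Metric.tendsto_nhds.mp hplus (ε/2) (by linarith))
  obtain ⟨M₂, hM₂⟩ := eventually_atBot.mp (Metric.tendsto_nhds.mp hminus (ε/2) (by linarith))
  have h3 : Tendsto (fun s : ℝ => (∫ y, |π₀ y|) - ∫ y in (-s)..s, |π₀ y|) atTop (nhds 0) := by
    have h0 := MeasureTheory.intervalIntegral_tendsto_integral hπ.abs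
      tendsto_neg_atTop_atBot tendsto_id
    have h1 := (tendsto_const_nhds (x := ∫ y, |π₀ y|) (f := atTop)).sub h0
    rwa [sub_self] at h1
  obtain ⟨M₃, hM₃⟩ := eventually_atTop.mp (Metric.tendsto_nhds.mp h3 (ε/2) (by linarith))
  rw [eventually_atTop]
  refine ⟨max (max (M₁ + R) (R - M₂)) (max (M₃ + R) (R + 1)), fun t ht x hx => ?_⟩
  have hx' : |x| ≤ R := hx
  have hxR : -R ≤ x ∧ x ≤ R := abs_le.mp hx'
  have ht1 : M₁ + R ≤ t := le_trans (le_trans (le_max_left _ _) (le_max_left _ _)) ht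
  have ht2 : R - M₂ ≤ t := le_trans (le_trans (le_max_right _ _) (le_max_left _ _)) ht
  have ht3 : M₃ + R ≤ t := le_trans (le_trans (le_max_left _ _) (le_max_right _ _)) ht
  have ht4 : R + 1 ≤ t := le_trans (le_trans (le_max_right _ _) (le_max_right _ _)) ht
  have b1 : |ψ₀ (x + t) - Cp| < ε/2 := by
    have := hM₁ (x + t) (by linarith [hxR.1])
    rwa [Real.dist_eq] at this
  have b2 : |ψ₀ (x - t) - Cm| < ε/2 := by
    have := hM₂ (x - t) (by linarith [hxR.2])
    rwa [Real.dist_eq] at this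
  set s := t - R with hsdef
  have b3 : |(∫ y, π₀ y) - ∫ y in (x - t)..(x + t), π₀ y| < ε/2 := by
    have htail := dalembert_tail_bound π₀ hπ (by linarith : (0:ℝ) ≤ s)
      (by simp [hsdef]; linarith [hxR.2] : x - t ≤ -s) (by simp [hsdef]; linarith [hxR.1] : s ≤ x + t)
    have := hM₃ s (by linarith)
    rw [Real.dist_eq, sub_zero] at this
    exact lt_of_le_of_lt (htail.trans (le_abs_self _)) this
  rw [Real.dist_eq]
  have key : (Cp + Cm) / 2 + (∫ y, π₀ y) / 2
      - ((ψ₀ (x + t) + ψ₀ (x - t)) / 2 + (∫ y in (x - t)..(x + t), π₀ y) / 2)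
      = ((Cp - ψ₀ (x + t)) + (Cm - ψ₀ (x - t))
        + ((∫ y, π₀ y) - ∫ y in (x - t)..(x + t), π₀ y)) / 2 := by ring
  rw [key, abs_div, abs_two]
  have h123 := abs_add_three (Cp - ψ₀ (x + t)) (Cm - ψ₀ (x - t))
    ((∫ y, π₀ y) - ∫ y in (x - t)..(x + t), π₀ y)
  rw [abs_sub_comm] at b1 b2
  linarith

/-- Global attraction of the d'Alembert solution of the 1D wave equation to the
stationary states `S₊` and `S₋`, uniformly on every bounded interval `|x| ≤ R`. -/
theorem dalembert_attraction_to_stationary_states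
    (ψ₀ π₀ : ℝ → ℝ) (Cp Cm : ℝ)
    (hcont : Continuous ψ₀)
    (hplus : Tendsto ψ₀ atTop (nhds Cp))
    (hminus : Tendsto ψ₀ atBot (nhds Cm))
    (hπ : Integrable π₀ volume) :
    ∀ R > (0 : ℝ),
      TendstoUniformlyOn
        (fun t x => (ψ₀ (x + t) + ψ₀ (x - t)) / 2 + (∫ y in (x - t)..(x + t), π₀ y) / 2)
        (fun _ => (Cp + Cm) / 2 + (∫ y, π₀ y) / 2)
        atTop {x : ℝ | |x| ≤ R} ∧
      TendstoUniformlyOn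
        (fun t x => (ψ₀ (x + t) + ψ₀ (x - t)) / 2 + (∫ y in (x - t)..(x + t), π₀ y) / 2)
        (fun _ => (Cp + Cm) / 2 - (∫ y, π₀ y) / 2)
        atBot {x : ℝ | |x| ≤ R} := by
  intro R hR
  refine ⟨dalembert_aux ψ₀ π₀ Cp Cm hplus hminus hπ R, ?_⟩
  have G := dalembert_aux ψ₀ (fun y => -π₀ y) Cp Cm hplus hminus hπ.neg R
  intro u hu
  have hG := G u hu
  have := tendsto_neg_atBot_atTop.eventually hG
  filter_upwards [this] with t ht x hx
  have h := ht x hx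
  have e3 : x + -t = x - t := by ring
  have e4 : x - -t = x + t := by ring
  rw [e3, e4] at h
  have e2 : (∫ y in (x + t)..(x - t), -π₀ y) = ∫ y in (x - t)..(x + t), π₀ y := by
    rw [intervalIntegral.integral_neg, intervalIntegral.integral_symm (x + t) (x - t)]
  have e1 : (∫ y, -π₀ y) = -∫ y, π₀ y := integral_neg π₀
  rw [e2, e1] at h
  have e5 : (Cp + Cm) / 2 + (-∫ y, π₀ y) / 2 = (Cp + Cm) / 2 - (∫ y, π₀ y) / 2 := by ring
  have e6 : (ψ₀ (x - t) + ψ₀ (x + t)) / 2 = (ψ₀ (x + t) + ψ₀ (x - t)) / 2 := by ring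
  rw [e5, e6] at h
  exact h
end

section
/- Let m > 0 and ω ∈ ℝ with |ω| ≠ m. For each ε > 0 let k_ε ∈ ℂ be any complex number with Im k_ε > 0 and k_ε² = (ω + iε)² − m². Then lim_{ε → 0+} ε·(∫_ℝ |∂ₓ exp(i·k_ε·|x|)|² dx + m² ∫_ℝ |exp(i·k_ε·|x|)|² dx) = n(ω), where n(ω) = |ω|·√(ω² − m²) if |ω| > m and n(ω) = 0 if |ω| < m. -/
/-!
For `Im k > 0` the wave `exp(i k |x|)` decays exponentially, and its `H¹`-norm squared is
`(|k|² + m²) / Im k`. With `w_ε = (ω + iε)² − m²` the root `k_ε` satisfies `|k_ε|² = |w_ε|`,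
`(Im k_ε)² = (|w_ε| − Re w_ε)/2` and `(Re k_ε)² = (|w_ε| + Re w_ε)/2`, all continuous in `ε`.
In the spectral gap `Im k_ε → √(m² − ω²) > 0`, so `ε (|k_ε|² + m²) / Im k_ε → 0`. On the continuous
spectrum `Im k_ε → 0`, but `Im w_ε = 2 Re k_ε Im k_ε = 2ωε` turns `ε / Im k_ε` into
`|Re k_ε| / |ω| → √(ω² − m²) / |ω|`, while `|k_ε|² + m² → ω²`.
-/

open MeasureTheory Filter Topology

theorem integral_exp_mul_abs {a : ℝ} (ha : a < 0) : ∫ x : ℝ, Real.exp (a * |x|) = -2 / a := by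
  rw [integral_comp_abs (f := fun x => Real.exp (a * x)), integral_exp_mul_Ioi ha]
  simp only [mul_zero, Real.exp_zero]
  ring

namespace Complex

theorem sq_norm_exp_I_mul_ofReal (k : ℂ) (x : ℝ) :
    ‖exp (I * k * x)‖ ^ 2 = Real.exp (-2 * k.im * x) := by
  rw [norm_exp, sq, ← Real.exp_add]
  congr 1
  simp [mul_re, mul_im]
  ring

theorem sq_re_eq (z : ℂ) : z.re ^ 2 = (‖z ^ 2‖ + (z ^ 2).re) / 2 := by
  rw [norm_pow, Complex.sq_norm, normSq_apply]
  simp only [sq, mul_re]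
  ring

theorem sq_im_eq (z : ℂ) : z.im ^ 2 = (‖z ^ 2‖ - (z ^ 2).re) / 2 := by
  rw [norm_pow, Complex.sq_norm, normSq_apply]
  simp only [sq, mul_re]
  ring

end Complex

section OutgoingWave

variable {k : ℂ}

theorem integral_sq_norm_exp_I_mul_abs (hk : 0 < k.im) :
    ∫ x : ℝ, ‖Complex.exp (Complex.I * k * (|x| : ℝ))‖ ^ 2 = 1 / k.im := by
  simp_rw [Complex.sq_norm_exp_I_mul_ofReal]
  rw [integral_exp_mul_abs (by linarith)]
  field_simp

theorem integral_sq_norm_deriv_exp_I_mul_abs (hk : 0 < k.im) :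
    ∫ x : ℝ, ‖Complex.I * k * (Real.sign x : ℂ) * Complex.exp (Complex.I * k * (|x| : ℝ))‖ ^ 2
      = ‖k‖ ^ 2 / k.im := by
  have hsign : ∀ᵐ x : ℝ, ‖Complex.I * k * (Real.sign x : ℂ) *
      Complex.exp (Complex.I * k * (|x| : ℝ))‖ ^ 2
        = ‖k‖ ^ 2 * ‖Complex.exp (Complex.I * k * (|x| : ℝ))‖ ^ 2 := by
    filter_upwards [Measure.ae_ne volume 0] with x hx
    rcases Real.sign_apply_eq_of_ne_zero x hx with h | h <;> simp [h, mul_pow]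
  rw [integral_congr_ae hsign, integral_const_mul, integral_sq_norm_exp_I_mul_abs hk,
    mul_one_div]

theorem h1NormSq_exp_I_mul_abs (m : ℝ) (hk : 0 < k.im) :
    (∫ x : ℝ, ‖Complex.I * k * (Real.sign x : ℂ) * Complex.exp (Complex.I * k * (|x| : ℝ))‖ ^ 2)
      + m ^ 2 * ∫ x : ℝ, ‖Complex.exp (Complex.I * k * (|x| : ℝ))‖ ^ 2
      = (‖k‖ ^ 2 + m ^ 2) / k.im := by
  rw [integral_sq_norm_deriv_exp_I_mul_abs hk, integral_sq_norm_exp_I_mul_abs hk]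
  ring

end OutgoingWave

section SquareRoot

variable {w k : ℝ → ℂ}

theorem tendsto_mul_div_im_of_sq_eq_of_im_eq {ω r : ℝ} (c : ℝ) (hω : ω ≠ 0) (hr : 0 ≤ r)
    (hw : ContinuousAt w 0) (hw0 : w 0 = r) (hwim : ∀ ε, (w ε).im = 2 * ω * ε)
    (hk : ∀ ε > (0 : ℝ), 0 < (k ε).im ∧ k ε ^ 2 = w ε) :
    Tendsto (fun ε => ε * ((‖k ε‖ ^ 2 + c) / (k ε).im)) (𝓝[>] 0)
      (𝓝 ((r + c) * √r / |ω|)) := by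
  have hF : ContinuousAt (fun ε => (‖w ε‖ + c) * √((‖w ε‖ + (w ε).re) / 2) / |ω|) 0 := by
    fun_prop
  have hF0 : (‖w 0‖ + c) * √((‖w 0‖ + (w 0).re) / 2) / |ω| = (r + c) * √r / |ω| := by
    rw [hw0, Complex.norm_real, Complex.ofReal_re, Real.norm_eq_abs, abs_of_nonneg hr,
      add_self_div_two]
  refine (hF0 ▸ hF.continuousWithinAt.tendsto (s := Set.Ioi 0)).congr' ?_
  filter_upwards [self_mem_nhdsWithin] with ε (hε : 0 < ε)
  obtain ⟨him, hsq⟩ := hk ε hε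
  have hre : |(k ε).re| = √((‖w ε‖ + (w ε).re) / 2) := by
    rw [← hsq, ← Complex.sq_re_eq, Real.sqrt_sq_eq_abs]
  have hprod : |(k ε).re| * (k ε).im = |ω| * ε := by
    have h := congrArg Complex.im hsq
    rw [hwim, sq, Complex.mul_im] at h
    rw [← abs_of_pos him, ← abs_mul, show (k ε).re * (k ε).im = ω * ε by linarith, abs_mul,
      abs_of_pos hε]
  rw [← hre, ← norm_pow, hsq]
  field_simp
  linear_combination (‖w ε‖ + c) * hprod

theorem tendsto_mul_div_im_of_sq_eq_of_re_lt_norm (c : ℝ) (hw : ContinuousAt w 0)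
    (hw0 : (w 0).re < ‖w 0‖) (hk : ∀ ε > (0 : ℝ), 0 < (k ε).im ∧ k ε ^ 2 = w ε) :
    Tendsto (fun ε => ε * ((‖k ε‖ ^ 2 + c) / (k ε).im)) (𝓝[>] 0) (𝓝 0) := by
  have hden : √((‖w 0‖ - (w 0).re) / 2) ≠ 0 := by
    have : 0 < (‖w 0‖ - (w 0).re) / 2 := by linarith
    positivity
  have hG : ContinuousAt (fun ε => ε * ((‖w ε‖ + c) / √((‖w ε‖ - (w ε).re) / 2))) 0 := by
    fun_prop (disch := exact hden)
  have hG0 := hG.continuousWithinAt.tendsto (s := Set.Ioi 0)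
  rw [zero_mul] at hG0
  refine hG0.congr' ?_
  filter_upwards [self_mem_nhdsWithin] with ε (hε : 0 < ε)
  obtain ⟨him, hsq⟩ := hk ε hε
  rw [← hsq, ← Complex.sq_im_eq, Real.sqrt_sq him.le, norm_pow]

end SquareRoot

/-- The limit `ε → 0+` of `ε` times the `H¹`-norm squared of the outgoing wave
`exp(i k_ε |x|)`, where `k_ε² = (ω + iε)² − m²`, `Im k_ε > 0`, equals
`n(ω) = |ω|√(ω² − m²)` for `|ω| > m` and `0` for `|ω| < m`. -/
theorem limit_weight_on_continuous_spectrum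
    (m ω : ℝ) (hm : 0 < m) (hω : |ω| ≠ m) (kε : ℝ → ℂ)
    (hk : ∀ ε > (0 : ℝ), 0 < (kε ε).im ∧
      (kε ε) ^ 2 = ((ω : ℂ) + (ε : ℂ) * Complex.I) ^ 2 - (m : ℂ) ^ 2) :
    Tendsto (fun ε : ℝ =>
        ε * ((∫ x : ℝ, ‖Complex.I * kε ε * (Real.sign x : ℂ) *
                Complex.exp (Complex.I * kε ε * (|x| : ℝ))‖ ^ 2)
          + m ^ 2 * ∫ x : ℝ, ‖Complex.exp (Complex.I * kε ε * (|x| : ℝ))‖ ^ 2))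
      (nhdsWithin 0 (Set.Ioi 0))
      (nhds (if m < |ω| then |ω| * Real.sqrt (ω ^ 2 - m ^ 2) else 0)) := by
  suffices h : Tendsto (fun ε => ε * ((‖kε ε‖ ^ 2 + m ^ 2) / (kε ε).im)) (𝓝[>] 0)
      (𝓝 (if m < |ω| then |ω| * √(ω ^ 2 - m ^ 2) else 0)) from
    h.congr' (eventually_mem_nhdsWithin.mono fun ε hε => by
      simp only [h1NormSq_exp_I_mul_abs m (hk ε hε).1])
  have hw : Continuous fun ε : ℝ => ((ω : ℂ) + (ε : ℂ) * Complex.I) ^ 2 - (m : ℂ) ^ 2 := by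
    fun_prop
  have hw0 : ((ω : ℂ) + ((0 : ℝ) : ℂ) * Complex.I) ^ 2 - (m : ℂ) ^ 2
      = ((ω ^ 2 - m ^ 2 : ℝ) : ℂ) := by
    simp
  split_ifs with hmω
  · have hgap : 0 < ω ^ 2 - m ^ 2 := by nlinarith [sq_abs ω]
    have hω0 : ω ≠ 0 := abs_pos.mp (hm.trans hmω)
    have hwim (ε : ℝ) : (((ω : ℂ) + (ε : ℂ) * Complex.I) ^ 2 - (m : ℂ) ^ 2).im = 2 * ω * ε := by
      simp [sq, Complex.mul_im]
      ring
    convert tendsto_mul_div_im_of_sq_eq_of_im_eq (m ^ 2) hω0 hgap.le hw.continuousAt hw0 hwim hk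
      using 2
    rw [sub_add_cancel, ← sq_abs ω]
    field_simp
  · have hgap : ω ^ 2 < m ^ 2 := by
      nlinarith [sq_abs ω, abs_nonneg ω, (not_lt.mp hmω).lt_of_ne hω]
    refine tendsto_mul_div_im_of_sq_eq_of_re_lt_norm (m ^ 2) hw.continuousAt ?_ hk
    rw [hw0, Complex.norm_real, Complex.ofReal_re, Real.norm_eq_abs, abs_of_neg (by linarith)]
    linarith
end

section
/- Let m > 0 and δ > 0. Then there exists ε_δ > 0 such that for all ω ∈ ℝ with |ω| > m + δ, all ε ∈ (0, ε_δ), and every k ∈ ℂ with Im k > 0 and k² = (ω + iε)² − m², one has ε·(∫_ℝ |∂ₓ exp(i·k·|x|)|² dx + m² ∫_ℝ |exp(i·k·|x|)|² dx) ≥ |ω|·√(ω² − m²)/2. -/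
/-!
Since `‖exp (i k |x|)‖ = exp (-(Im k) |x|)`, both integrals are explicit: the `H¹`-norm equals
`(‖k‖² + m²) / Im k`. Writing `k = b + i a`, the equation for `k²` reads
`b² - a² = ω² - ε² - m²` and `a b = ω ε`. For `4ε² ≤ ω² - m²` the first gives
`|b| ≥ (2/3)√(ω² - m²)` and `a² + b² + m² ≥ (3/4)ω²`, and the second turns `a` into
`|ω| ε / |b|`, which yields the bound. The smallness condition holds once `ε < δ / 2`.
-/

open MeasureTheory Complex

lemma integral_exp_neg_mul_abs {c : ℝ} (hc : 0 < c) :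
    ∫ x : ℝ, Real.exp (-c * |x|) = 2 / c := by
  rw [integral_comp_abs (f := fun x => Real.exp (-c * x)), integral_exp_mul_Ioi (by linarith) 0]
  field_simp
  simp

lemma norm_exp_I_mul_abs_sq (k : ℂ) (x : ℝ) :
    ‖exp (I * k * (|x| : ℝ))‖ ^ 2 = Real.exp (-(2 * k.im) * |x|) := by
  rw [norm_exp, ← Real.exp_nat_mul]
  congr 1
  simp [mul_re]
  ring

lemma integral_norm_exp_I_mul_abs_sq {k : ℂ} (hk : 0 < k.im) :
    ∫ x : ℝ, ‖exp (I * k * (|x| : ℝ))‖ ^ 2 = 1 / k.im := by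
  simp_rw [norm_exp_I_mul_abs_sq, integral_exp_neg_mul_abs (by positivity : 0 < 2 * k.im)]
  field_simp

lemma integral_norm_I_mul_sign_mul_exp_I_mul_abs_sq {k : ℂ} (hk : 0 < k.im) :
    ∫ x : ℝ, ‖I * k * (Real.sign x : ℂ) * exp (I * k * (|x| : ℝ))‖ ^ 2 = ‖k‖ ^ 2 / k.im := by
  have hsign : ∀ᵐ x : ℝ, |Real.sign x| = 1 := by
    filter_upwards [Measure.ae_ne volume 0] with x hx
    rcases hx.lt_or_gt with h | h <;> simp [Real.sign_of_neg, Real.sign_of_pos, h]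
  rw [div_eq_mul_one_div, ← integral_norm_exp_I_mul_abs_sq hk, ← integral_const_mul]
  refine integral_congr_ae ?_
  filter_upwards [hsign] with x hx
  simp [hx, mul_pow]

lemma abs_mul_sqrt_sq_sub_sq_mul_le {a b ω ε m : ℝ} (ha : 0 < a) (hε : 0 ≤ ε)
    (hre : b ^ 2 - a ^ 2 = ω ^ 2 - ε ^ 2 - m ^ 2) (him : a * b = ω * ε)
    (hsmall : 4 * ε ^ 2 ≤ ω ^ 2 - m ^ 2) :
    |ω| * √(ω ^ 2 - m ^ 2) / 2 * a ≤ ε * (a ^ 2 + b ^ 2 + m ^ 2) := by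
  set s := √(ω ^ 2 - m ^ 2)
  have hs : s ^ 2 = ω ^ 2 - m ^ 2 := Real.sq_sqrt (by nlinarith)
  have hb : 2 * s ≤ 3 * |b| :=
    (sq_le_sq₀ (by positivity) (by positivity)).1 (by nlinarith [sq_abs b])
  have hnorm : 3 * ω ^ 2 ≤ 4 * (a ^ 2 + b ^ 2 + m ^ 2) := by nlinarith
  have hab : a * |b| = |ω| * ε := by
    rw [← abs_of_pos ha, ← abs_mul, him, abs_mul, abs_of_nonneg hε]
  have hb0 : 0 < |b| := abs_pos.2 (by rintro rfl; nlinarith)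
  refine le_of_mul_le_mul_right ?_ hb0
  calc |ω| * s / 2 * a * |b| = ε * (3 * ω ^ 2 * (2 * s)) / 12 := by
        rw [mul_assoc, hab, ← sq_abs ω]; ring
    _ ≤ ε * (4 * (a ^ 2 + b ^ 2 + m ^ 2) * (3 * |b|)) / 12 := by gcongr
    _ = ε * (a ^ 2 + b ^ 2 + m ^ 2) * |b| := by ring

lemma abs_mul_sqrt_sq_sub_sq_mul_im_le {m ω ε : ℝ} {k : ℂ} (hk : 0 < k.im) (hε : 0 ≤ ε)
    (hsmall : 4 * ε ^ 2 ≤ ω ^ 2 - m ^ 2)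
    (hk2 : k ^ 2 = ((ω : ℂ) + ε * I) ^ 2 - (m : ℂ) ^ 2) :
    |ω| * √(ω ^ 2 - m ^ 2) / 2 * k.im ≤ ε * (‖k‖ ^ 2 + m ^ 2) := by
  have hre := congrArg re hk2
  have him := congrArg im hk2
  simp only [sq, mul_re, mul_im, sub_re, sub_im, add_re, add_im, ofReal_re, ofReal_im, I_re,
    I_im] at hre him
  have key := abs_mul_sqrt_sq_sub_sq_mul_le (b := k.re) hk hε (by linear_combination hre)
    (by linear_combination him / 2) hsmall
  rw [← normSq_eq_norm_sq, normSq_apply]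
  linarith

/-- Uniform lower bound on the continuous spectral region `|ω| > m + δ`:
there is `ε_δ > 0` such that
`ε‖exp(i k |x|)‖²_{H¹} ≥ |ω|√(ω² − m²)/2` for all `0 < ε < ε_δ`,
where `k² = (ω + iε)² − m²`, `Im k > 0`. -/
theorem uniform_lower_bound_on_continuous_spectrum (m δ : ℝ) (hm : 0 < m) (hδ : 0 < δ) :
    ∃ εδ > (0 : ℝ), ∀ ω : ℝ, m + δ < |ω| → ∀ ε ∈ Set.Ioo (0 : ℝ) εδ, ∀ k : ℂ,
      0 < k.im → k ^ 2 = ((ω : ℂ) + (ε : ℂ) * Complex.I) ^ 2 - (m : ℂ) ^ 2 →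
      |ω| * Real.sqrt (ω ^ 2 - m ^ 2) / 2 ≤
        ε * ((∫ x : ℝ, ‖Complex.I * k * (Real.sign x : ℂ) *
                Complex.exp (Complex.I * k * (|x| : ℝ))‖ ^ 2)
          + m ^ 2 * ∫ x : ℝ, ‖Complex.exp (Complex.I * k * (|x| : ℝ))‖ ^ 2) := by
  refine ⟨δ / 2, by positivity, fun ω hω ε ⟨hε0, hεδ⟩ k hk hk2 => ?_⟩
  have hω2 : (m + δ) ^ 2 < ω ^ 2 := by
    rw [← sq_abs ω]; exact pow_lt_pow_left₀ hω (by positivity) two_ne_zero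
  have hsmall : 4 * ε ^ 2 ≤ ω ^ 2 - m ^ 2 := by nlinarith
  rw [integral_norm_I_mul_sign_mul_exp_I_mul_abs_sq hk, integral_norm_exp_I_mul_abs_sq hk,
    show ε * (‖k‖ ^ 2 / k.im + m ^ 2 * (1 / k.im)) = ε * (‖k‖ ^ 2 + m ^ 2) / k.im by ring,
    le_div_iff₀ hk]
  exact abs_mul_sqrt_sq_sub_sq_mul_im_le hk hε0.le hsmall hk2
end

section
/- Let F : ℝ → ℝ be continuous and assume that the zero set Q = {ζ ∈ ℝ : F(ζ) = 0} contains no nondegenerate interval, i.e., there are no a < b with [a,b] ⊆ Q. Let ζ : [0, ∞) → ℝ be a bounded C¹ function, let λ : [0, ∞) → ℝ be continuous with λ(t) → 0 as t → ∞, and assume the ODE (1/4π)·ζ′(t) + F(ζ(t)) = λ(t) holds for all t ≥ 0. Then there exists q ∈ ℝ with F(q) = 0 such that ζ(t) → q as t → ∞. -/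
/-!
If `ζ` did not converge, we could pick `c` strictly between `liminf ζ` and `limsup ζ` with
`F c ≠ 0`, since the zero set of `F` contains no interval. Once `λ` is small compared with `F c`,
the equation forces `ζ'` to have the sign of `-F c` whenever `ζ = c`, so `ζ` crosses the level `c`
in one direction only and eventually stays on one side of it, contradicting the choice of `c`.
Hence `ζ → q`, and then `ζ' → -4π F q`, which must vanish since `ζ` converges.
-/

open Filter Set Topology

section Deriv

variable {g g' : ℝ → ℝ}

theorem tendsto_atBot_of_eventually_deriv_le_neg {ε : ℝ} (hε : 0 < ε)
    (hderiv : ∀ᶠ t in atTop, HasDerivAt g (g' t) t) (hle : ∀ᶠ t in atTop, g' t ≤ -ε) :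
    Tendsto g atTop atBot := by
  obtain ⟨T, hT⟩ := eventually_atTop.1 (hderiv.and hle)
  have hlinear : ∀ t ≥ T, g t ≤ g T + -ε * (t - T) := by
    intro t ht
    refine image_le_of_deriv_right_le_deriv_boundary (B := fun s => g T + -ε * (s - T))
      (fun s hs => (hT s hs.1).1.continuousAt.continuousWithinAt)
      (fun s hs => (hT s hs.1).1.hasDerivWithinAt) (le_of_eq (by ring))
      (by fun_prop) (fun s _ => ?_) (fun s hs => (hT s hs.1).2) ⟨ht, le_rfl⟩
    simpa using ((hasDerivAt_id s).sub_const T).const_mul (-ε) |>.const_add (g T) |>.hasDerivWithinAt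
  refine tendsto_atBot_mono' atTop ((eventually_ge_atTop T).mono hlinear) ?_
  exact tendsto_atBot_add_const_left _ _
    ((tendsto_atTop_add_const_right _ _ tendsto_id).const_mul_atTop_of_neg (neg_neg_of_pos hε))

theorem not_tendsto_nhds_of_tendsto_deriv_neg {l m : ℝ} (hm : m < 0)
    (hderiv : ∀ᶠ t in atTop, HasDerivAt g (g' t) t) (hg' : Tendsto g' atTop (𝓝 m)) :
    ¬ Tendsto g atTop (𝓝 l) := by
  have hle : ∀ᶠ t in atTop, g' t ≤ -(-m / 2) :=
    hg'.eventually (ge_mem_nhds (by linarith))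
  exact not_tendsto_nhds_of_tendsto_atBot
    (tendsto_atBot_of_eventually_deriv_le_neg (by linarith) hderiv hle) l

theorem eq_zero_of_tendsto_of_tendsto_deriv {l m : ℝ}
    (hderiv : ∀ᶠ t in atTop, HasDerivAt g (g' t) t)
    (hg : Tendsto g atTop (𝓝 l)) (hg' : Tendsto g' atTop (𝓝 m)) : m = 0 := by
  rcases lt_trichotomy m 0 with hm | hm | hm
  · exact absurd hg (not_tendsto_nhds_of_tendsto_deriv_neg hm hderiv hg')
  · exact hm
  · exact absurd hg.neg (not_tendsto_nhds_of_tendsto_deriv_neg (neg_neg_of_pos hm)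
      (hderiv.mono fun t ht => ht.neg) hg'.neg)

theorem eventually_le_of_frequently_le_of_deriv_neg_at_level {c : ℝ}
    (hderiv : ∀ᶠ t in atTop, HasDerivAt g (g' t) t)
    (hlevel : ∀ᶠ t in atTop, g t = c → g' t < 0) (hfreq : ∃ᶠ t in atTop, g t ≤ c) :
    ∀ᶠ t in atTop, g t ≤ c := by
  obtain ⟨T, hT⟩ := eventually_atTop.1 (hderiv.and hlevel)
  obtain ⟨t₀, ht₀T, ht₀⟩ := frequently_atTop.1 hfreq T
  refine eventually_atTop.2 ⟨t₀, fun t ht => ?_⟩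
  exact image_le_of_deriv_right_lt_deriv_boundary (B := fun _ => c) (B' := 0)
    (fun s hs => (hT s (ht₀T.trans hs.1)).1.continuousAt.continuousWithinAt)
    (fun s hs => (hT s (ht₀T.trans hs.1)).1.hasDerivWithinAt) ht₀
    (fun _ => hasDerivAt_const _ _) (fun s hs => (hT s (ht₀T.trans hs.1)).2) ⟨ht, le_rfl⟩

theorem eventually_ge_or_eventually_le_of_deriv_neg_at_level {c : ℝ}
    (hderiv : ∀ᶠ t in atTop, HasDerivAt g (g' t) t)
    (hlevel : ∀ᶠ t in atTop, g t = c → g' t < 0) :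
    (∀ᶠ t in atTop, c ≤ g t) ∨ ∀ᶠ t in atTop, g t ≤ c := by
  by_cases hfreq : ∃ᶠ t in atTop, g t ≤ c
  · exact .inr (eventually_le_of_frequently_le_of_deriv_neg_at_level hderiv hlevel hfreq)
  · exact .inl ((not_frequently.1 hfreq).mono fun t ht => (not_le.1 ht).le)

end Deriv

theorem exists_tendsto_of_forall_lt_exists_eventually_ge_or_eventually_le {α : Type*}
    {l : Filter α} [l.NeBot] {f : α → ℝ}
    (hle : IsBoundedUnder (· ≤ ·) l f) (hge : IsBoundedUnder (· ≥ ·) l f)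
    (h : ∀ a b, a < b → ∃ c ∈ Icc a b, (∀ᶠ x in l, c ≤ f x) ∨ ∀ᶠ x in l, f x ≤ c) :
    ∃ q, Tendsto f l (𝓝 q) := by
  refine ⟨limsup f l, tendsto_of_liminf_eq_limsup ?_ rfl hle hge⟩
  by_contra hne
  set L := limsup f l
  set m := liminf f l
  have hmL : m < L := (liminf_le_limsup hle hge).lt_of_ne hne
  obtain ⟨c, hc, hside⟩ := h ((2 * m + L) / 3) ((m + 2 * L) / 3) (by linarith)
  have hbelow : ∃ᶠ x in l, f x < c :=
    frequently_lt_of_liminf_lt hle.isCoboundedUnder_ge (by linarith [hc.1])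
  have habove : ∃ᶠ x in l, c < f x :=
    frequently_lt_of_lt_limsup hge.isCoboundedUnder_le (by linarith [hc.2])
  rcases hside with hside | hside
  · exact hbelow (hside.mono fun x hx => not_lt.2 hx)
  · exact habove (hside.mono fun x hx => not_lt.2 hx)

theorem eventually_ge_or_eventually_le_of_ode {F ζ ζ' lam : ℝ → ℝ} {a c : ℝ} (ha : 0 < a)
    (hderiv : ∀ᶠ t in atTop, HasDerivAt ζ (ζ' t) t)
    (hODE : ∀ᶠ t in atTop, a * ζ' t + F (ζ t) = lam t)
    (hlam : Tendsto lam atTop (𝓝 0)) (hc : F c ≠ 0) :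
    (∀ᶠ t in atTop, c ≤ ζ t) ∨ ∀ᶠ t in atTop, ζ t ≤ c := by
  rcases hc.lt_or_gt with hc | hc
  · have hlevel : ∀ᶠ t in atTop, -ζ t = -c → -ζ' t < 0 := by
      filter_upwards [hODE, hlam.eventually (lt_mem_nhds hc)] with t hODEt hlamt hζt
      obtain rfl : ζ t = c := neg_inj.1 hζt
      nlinarith
    simpa only [neg_le_neg_iff, or_comm] using
      eventually_ge_or_eventually_le_of_deriv_neg_at_level (g := fun t => -ζ t)
        (hderiv.mono fun t ht => ht.neg) hlevel
  · have hlevel : ∀ᶠ t in atTop, ζ t = c → ζ' t < 0 := by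
      filter_upwards [hODE, hlam.eventually (gt_mem_nhds hc)] with t hODEt hlamt hζt
      subst hζt
      nlinarith
    exact eventually_ge_or_eventually_le_of_deriv_neg_at_level hderiv hlevel

theorem reduced_ode_convergence_to_zero_of_F_general
    (F : ℝ → ℝ) (hF : Continuous F)
    (hQ : ∀ a b : ℝ, a < b → ¬ (Set.Icc a b ⊆ {ζ : ℝ | F ζ = 0}))
    (ζ ζ' lam : ℝ → ℝ)
    (hderiv : ∀ t : ℝ, 0 ≤ t → HasDerivAt ζ (ζ' t) t)
    (hbdd : ∃ C : ℝ, ∀ t : ℝ, 0 ≤ t → |ζ t| ≤ C)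
    (hlam : Tendsto lam atTop (nhds 0))
    (hODE : ∀ t : ℝ, 0 ≤ t → (1 / (4 * Real.pi)) * ζ' t + F (ζ t) = lam t) :
    ∃ q : ℝ, F q = 0 ∧ Tendsto ζ atTop (nhds q) := by
  have ha : 0 < 1 / (4 * Real.pi) := by positivity
  replace hderiv := eventually_atTop.2 ⟨0, hderiv⟩
  replace hODE := eventually_atTop.2 ⟨0, hODE⟩
  obtain ⟨C, hC⟩ := hbdd
  obtain ⟨hle, hge⟩ := isBoundedUnder_le_abs.1 ⟨C, eventually_map.2 (eventually_atTop.2 ⟨0, hC⟩)⟩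
  obtain ⟨q, hq⟩ := exists_tendsto_of_forall_lt_exists_eventually_ge_or_eventually_le hle hge
    fun a b hab => by
      obtain ⟨c, hc, hFc⟩ := not_subset.1 (hQ a b hab)
      exact ⟨c, hc, eventually_ge_or_eventually_le_of_ode ha hderiv hODE hlam hFc⟩
  refine ⟨q, ?_, hq⟩
  have hζ' : Tendsto ζ' atTop (𝓝 ((0 - F q) / (1 / (4 * Real.pi)))) :=
    ((hlam.sub ((hF.tendsto q).comp hq)).div_const _).congr' <| hODE.mono fun t ht => by
      simp only [Function.comp_apply, ← ht]
      field_simp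
      ring
  simpa using eq_zero_of_tendsto_of_tendsto_deriv hderiv hq hζ'

/-- Convergence of the reduced dynamics at a concentrated nonlinearity:
if `(1/4π)ζ′ + F(ζ) = λ` with `λ(t) → 0`, `ζ` bounded and `C¹`, and the zero
set of `F` contains no interval, then `ζ(t)` converges to some zero of `F`. -/
theorem reduced_ode_convergence_to_zero_of_F
    (F : ℝ → ℝ) (hF : Continuous F)
    (hQ : ∀ a b : ℝ, a < b → ¬ (Set.Icc a b ⊆ {ζ : ℝ | F ζ = 0}))
    (ζ ζ' lam : ℝ → ℝ)
    (hderiv : ∀ t : ℝ, 0 ≤ t → HasDerivAt ζ (ζ' t) t)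
    (hζ'cont : ContinuousOn ζ' (Set.Ici 0))
    (hbdd : ∃ C : ℝ, ∀ t : ℝ, 0 ≤ t → |ζ t| ≤ C)
    (hlamcont : ContinuousOn lam (Set.Ici 0))
    (hlam : Tendsto lam atTop (nhds 0))
    (hODE : ∀ t : ℝ, 0 ≤ t → (1 / (4 * Real.pi)) * ζ' t + F (ζ t) = lam t) :
    ∃ q : ℝ, F q = 0 ∧ Tendsto ζ atTop (nhds q) :=
  reduced_ode_convergence_to_zero_of_F_general F hF hQ ζ ζ' lam hderiv hbdd hlam hODE
end

section
/- Let ζ : [0, ∞) → ℝ be continuous and bounded with ζ(t) → q as t → ∞ for some q ∈ ℝ. Define ψ_S(x,t) = ζ(t − |x|)/(4π|x|) for 0 < |x| ≤ t and ψ_S(x,t) = 0 for |x| > t, where x ∈ ℝ³. Then for every R > 0, ∫_{|x| < R} |ψ_S(x,t) − q/(4π|x|)|² dx → 0 as t → ∞. -/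
open Filter MeasureTheory Metric

/-!
On a ball, `ψ_S(·, t) - q G` is dominated by `(sup |ζ| + |q|) G`, and `G² ∼ ‖x‖⁻²` is integrable
near the origin in dimension at least `3`. At each fixed `x`, once `t ≥ ‖x‖` the wave equals
`ζ (t - ‖x‖) G(x)`, which tends to `q G(x)`. Dominated convergence concludes.
-/

variable {E : Type*} [NormedAddCommGroup E]

noncomputable def sphericalWave (ζ : ℝ → ℝ) (t : ℝ) (x : E) : ℝ :=
  if ‖x‖ ≤ t then ζ (t - ‖x‖) / (4 * Real.pi * ‖x‖) else 0

lemma abs_sphericalWave_sub_le {ζ : ℝ → ℝ} {C : ℝ} (hC : ∀ s, 0 ≤ s → |ζ s| ≤ C)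
    (q t : ℝ) (x : E) :
    |sphericalWave ζ t x - q / (4 * Real.pi * ‖x‖)| ≤ (C + |q|) / (4 * Real.pi * ‖x‖) := by
  have hC0 : 0 ≤ C := (abs_nonneg _).trans (hC 0 le_rfl)
  unfold sphericalWave
  split_ifs with hxt
  · rw [div_sub_div_same, abs_div, abs_of_nonneg (a := 4 * Real.pi * ‖x‖) (by positivity)]
    refine div_le_div_of_nonneg_right ?_ (by positivity)
    calc |ζ (t - ‖x‖) - q| ≤ |ζ (t - ‖x‖)| + |q| := abs_sub _ _
      _ ≤ C + |q| := by gcongr; exact hC _ (sub_nonneg.2 hxt)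
  · rw [zero_sub, abs_neg, abs_div, abs_of_nonneg (a := 4 * Real.pi * ‖x‖) (by positivity)]
    refine div_le_div_of_nonneg_right ?_ (by positivity)
    exact le_add_of_nonneg_left hC0

lemma sq_sphericalWave_sub_le {ζ : ℝ → ℝ} {C : ℝ} (hC : ∀ s, 0 ≤ s → |ζ s| ≤ C)
    (q t : ℝ) (x : E) :
    |sphericalWave ζ t x - q / (4 * Real.pi * ‖x‖)| ^ 2 ≤
      ((C + |q|) / (4 * Real.pi)) ^ 2 * ‖x‖ ^ (-2 : ℝ) := by
  calc |sphericalWave ζ t x - q / (4 * Real.pi * ‖x‖)| ^ 2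
      ≤ ((C + |q|) / (4 * Real.pi * ‖x‖)) ^ 2 := by
        gcongr; exact abs_sphericalWave_sub_le hC q t x
    _ = ((C + |q|) / (4 * Real.pi)) ^ 2 * ‖x‖ ^ (-2 : ℝ) := by
        rw [Real.rpow_neg (norm_nonneg x), Real.rpow_two]
        ring

lemma tendsto_sphericalWave {ζ : ℝ → ℝ} {q : ℝ} (hlim : Tendsto ζ atTop (nhds q)) (x : E) :
    Tendsto (fun t => sphericalWave ζ t x) atTop (nhds (q / (4 * Real.pi * ‖x‖))) := by
  have hshift : Tendsto (fun t => ζ (t - ‖x‖)) atTop (nhds q) :=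
    hlim.comp (tendsto_atTop_add_const_right atTop (-‖x‖) tendsto_id)
  refine (hshift.div_const _).congr' ?_
  filter_upwards [eventually_ge_atTop ‖x‖] with t ht
  simp only [sphericalWave, if_pos ht]

lemma aestronglyMeasurable_sphericalWave [MeasurableSpace E] [BorelSpace E] {ζ : ℝ → ℝ} (hcont : ContinuousOn ζ (Set.Ici 0)) (t : ℝ)
    (μ : Measure E) : AEStronglyMeasurable (sphericalWave ζ t) μ := by
  have hcut : sphericalWave ζ t = fun x : E =>
      (closedBall 0 t).indicator (fun y => ζ (t - ‖y‖)) x / (4 * Real.pi * ‖x‖) := by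
    funext x
    by_cases hxt : ‖x‖ ≤ t <;> simp [sphericalWave, hxt]
  have hζ : ContinuousOn (fun y : E => ζ (t - ‖y‖)) (closedBall 0 t) :=
    hcont.comp (continuous_const.sub continuous_norm).continuousOn fun y hy =>
      sub_nonneg.2 (mem_closedBall_zero_iff.1 hy)
  rw [hcut]
  exact ((aestronglyMeasurable_indicator_iff measurableSet_closedBall).2
    (hζ.aestronglyMeasurable measurableSet_closedBall)).div₀
    (measurable_const.mul measurable_norm).aestronglyMeasurable

section FiniteDimensional

variable [NormedSpace ℝ E] [FiniteDimensional ℝ E] [MeasurableSpace E] [BorelSpace E]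
  {μ : Measure E} [μ.IsAddHaarMeasure]

lemma integrableOn_ball_norm_rpow_neg (hd : 1 ≤ Module.finrank ℝ E) {α : ℝ}
    (hα : α < Module.finrank ℝ E) (r : ℝ) :
    IntegrableOn (fun x : E => ‖x‖ ^ (-α)) (ball 0 r) μ :=
  integrableOn_ball_of_norm_le_rpow (C := 1) hd hα
    (Eventually.of_forall fun x => by
      rw [one_mul, Real.norm_of_nonneg (Real.rpow_nonneg (norm_nonneg x) _)])
    (measurable_norm.pow_const _).aestronglyMeasurable

theorem tendsto_integral_ball_sq_sphericalWave_sub (hd : 2 < Module.finrank ℝ E)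
    {ζ : ℝ → ℝ} {q C : ℝ} (hcont : ContinuousOn ζ (Set.Ici 0))
    (hC : ∀ s, 0 ≤ s → |ζ s| ≤ C) (hlim : Tendsto ζ atTop (nhds q)) (R : ℝ) :
    Tendsto (fun t => ∫ x in ball 0 R, |sphericalWave ζ t x - q / (4 * Real.pi * ‖x‖)| ^ 2 ∂μ)
      atTop (nhds 0) := by
  have hbound : IntegrableOn (fun x : E => ((C + |q|) / (4 * Real.pi)) ^ 2 * ‖x‖ ^ (-2 : ℝ))
      (ball 0 R) μ :=
    (integrableOn_ball_norm_rpow_neg (by omega) (by exact_mod_cast hd) R).const_mul _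
  have hmeas : ∀ t, AEStronglyMeasurable
      (fun x : E => |sphericalWave ζ t x - q / (4 * Real.pi * ‖x‖)| ^ 2) (μ.restrict (ball 0 R)) :=
    fun t => (continuous_abs.pow 2).comp_aestronglyMeasurable
      ((aestronglyMeasurable_sphericalWave hcont t _).sub
        (measurable_const.div (measurable_const.mul measurable_norm)).aestronglyMeasurable)
  have hpointwise : ∀ x : E,
      Tendsto (fun t => |sphericalWave ζ t x - q / (4 * Real.pi * ‖x‖)| ^ 2) atTop (nhds 0) := by
    intro x
    simpa using (((tendsto_sphericalWave hlim x).sub_const (q / (4 * Real.pi * ‖x‖))).abs.pow 2)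
  simpa using tendsto_integral_filter_of_dominated_convergence _ (Eventually.of_forall hmeas)
    (Eventually.of_forall fun t => Eventually.of_forall fun x => by
      rw [Real.norm_of_nonneg (by positivity)]; exact sq_sphericalWave_sub_le hC q t x)
    hbound (Eventually.of_forall hpointwise)

end FiniteDimensional

/-- Convergence of the outgoing spherical wave
`ψ_S(x,t) = ζ(t − |x|)/(4π|x|)` (for `|x| ≤ t`, and `0` for `|x| > t`)
to the stationary state `q/(4π|x|)` in `L²_loc(ℝ³)`. -/
theorem spherical_wave_attraction_to_stationary_state
    (ζ : ℝ → ℝ) (q : ℝ)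
    (hcont : ContinuousOn ζ (Set.Ici 0))
    (hbdd : ∃ C : ℝ, ∀ t : ℝ, 0 ≤ t → |ζ t| ≤ C)
    (hlim : Tendsto ζ atTop (nhds q)) :
    ∀ R > (0 : ℝ),
      Tendsto (fun t : ℝ =>
          ∫ x in Metric.ball (0 : EuclideanSpace ℝ (Fin 3)) R,
            |(if ‖x‖ ≤ t then ζ (t - ‖x‖) / (4 * Real.pi * ‖x‖) else 0) -
              q / (4 * Real.pi * ‖x‖)| ^ 2)
        atTop (nhds 0) := by
  obtain ⟨C, hC⟩ := hbdd
  intro R _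
  exact tendsto_integral_ball_sq_sphericalWave_sub (by simp) hcont hC hlim R
end
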